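/- Let k and r be positive integers with r < k and let p = (p_1,…,p_k) be a tuple of non-negative integers with S_{p,r} non-empty. Let (S,f) be uniformly distributed on Ω. Then the probability that G_γ(S,f) is a tree equals Σ_{π∈𝔖_k} sgn(π) Σ_{D⊆[k−1]} (−1)^{|D|} Pr( ∩_{i∈[k−1]} J^{f(i)}_{c_i(D), π(i)+1} ), where for i∈[k−1] one sets c_i(D) = i−1 if i∈D and c_i(D) = i otherwise, all subscripts being taken cyclically modulo k (in particular J^t_{0,j} means J^t_{k,j} and π(i)+1 is taken modulo k). -/

import Mathlib

open Finset

/-- The cyclic interval `]i,j]` of `[k] = {1,…,k}`, realized inside `ZMod k`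
(the element `k` of `[k]` is represented by `0 : ZMod k`). -/
def cyc (k : ℕ) [NeZero k] (i j : ZMod k) : Finset (ZMod k) :=
  Finset.univ.filter fun x => 1 ≤ (x - i).val ∧ (x - i).val ≤ (j - i).val

/-- Membership in `𝒮_{p,r}` : each `j ∈ [k]` belongs to exactly `p j` of the sets `S_1,…,S_r`. -/
def SprMem (k r : ℕ) [NeZero k] (p : ZMod k → ℕ) (S : Fin r → Finset (ZMod k)) : Prop :=
  ∀ j : ZMod k, Nat.card {i : Fin r // j ∈ S i} = p j

/-- Membership in `ℳ_{p,r}` : member of `𝒮_{p,r}` all of whose sets are proper subsets of `[k]`. -/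
def MprMem (k r : ℕ) [NeZero k] (p : ZMod k → ℕ) (S : Fin r → Finset (ZMod k)) : Prop :=
  SprMem k r p S ∧ ∀ i, S i ≠ Finset.univ

/-- `|ℳ_{p,r}|`. -/
noncomputable def Mcard (k r : ℕ) [NeZero k] (p : ZMod k → ℕ) : ℕ :=
  Nat.card {S : Fin r → Finset (ZMod k) // MprMem k r p S}

/-- `|𝒮_{p,r}|`. -/
noncomputable def Scard (k r : ℕ) [NeZero k] (p : ZMod k → ℕ) : ℕ :=
  Nat.card {S : Fin r → Finset (ZMod k) // SprMem k r p S}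

/-- `|ℳ_{q,r}|` for an integer-valued tuple `q` (empty if some entry of `q` is negative). -/
noncomputable def McardZ (k r : ℕ) [NeZero k] (q : ZMod k → ℤ) : ℕ :=
  Nat.card {S : Fin r → Finset (ZMod k) //
    (∀ j : ZMod k, (Nat.card {i : Fin r // j ∈ S i} : ℤ) = q j) ∧ ∀ i, S i ≠ Finset.univ}

/-- `alphaRel k S i j` holds iff `j = α(i,S)`. -/
def alphaRel (k : ℕ) [NeZero k] (S : Finset (ZMod k)) (i j : ZMod k) : Prop :=
  if S = Finset.univ then j = i else j ∉ S ∧ cyc k i (j - 1) ⊆ S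

/-- `betaRel k S i j` holds iff `j = β(i,S)`. -/
def betaRel (k : ℕ) [NeZero k] (S : Finset (ZMod k)) (i j : ZMod k) : Prop :=
  if S = Finset.univ then j = i else j + 1 ∉ S ∧ cyc k i j ⊆ S

/-- `gammaRel k S i j` holds iff `j = γ(i,S)`. -/
def gammaRel (k : ℕ) [NeZero k] (S : Finset (ZMod k)) (i j : ZMod k) : Prop :=
  if S = Finset.univ then j = i
  else if i ∈ S then j = i - 1
  else j + 1 ∉ S ∧ cyc k i j ⊆ S

/-- The digraph on `[k]` with the `k-1` arcs `(i, ζ(i, S_{f i}))` for `i ∈ [k-1]`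
(the nonzero elements of `ZMod k`) is a tree, i.e. a spanning tree oriented toward
the root `k` (represented by `0`): following the arcs from any vertex reaches the root. -/
def GIsTree (k r : ℕ) [NeZero k] (zeta : Finset (ZMod k) → ZMod k → ZMod k → Prop)
    (S : Fin r → Finset (ZMod k)) (f : {i : ZMod k // i ≠ 0} → Fin r) : Prop :=
  ∃ g : ZMod k → ZMod k, g 0 = 0 ∧
    (∀ i : {i : ZMod k // i ≠ 0}, zeta (S (f i)) i.1 (g i.1)) ∧
    ∀ x : ZMod k, ∃ n : ℕ, g^[n] x = 0

/-- Sample space: pairs of a tuple `S ∈ ℳ_{p,r}` and a surjection `f : [k-1] → [r]`,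
with the uniform probability measure. -/
abbrev OmM (k r : ℕ) [NeZero k] (p : ZMod k → ℕ) : Type :=
  {om : (Fin r → Finset (ZMod k)) × ({i : ZMod k // i ≠ 0} → Fin r) //
    MprMem k r p om.1 ∧ Function.Surjective om.2}

/-- Sample space `Ω`: pairs of a tuple `S ∈ 𝒮_{p,r}` and a surjection `f : [k-1] → [r]`,
with the uniform probability measure. -/
abbrev OmS (k r : ℕ) [NeZero k] (p : ZMod k → ℕ) : Type :=
  {om : (Fin r → Finset (ZMod k)) × ({i : ZMod k // i ≠ 0} → Fin r) //
    SprMem k r p om.1 ∧ Function.Surjective om.2}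

/-- Uniform probability of an event `A` in a (finite) sample space `Om`. -/
noncomputable def PrU {Om : Type} (A : Set Om) : ℚ :=
  (Nat.card A : ℚ) / (Nat.card Om : ℚ)

/-- The `Pr`-determinant of a `k × k` matrix of events (rows and columns indexed by
`[k]`, i.e. by `ZMod k`). -/
noncomputable def Pdet {k : ℕ} [NeZero k] {Om : Type} (E : ZMod k → ZMod k → Set Om) : ℚ :=
  ∑ pi : Equiv.Perm (ZMod k), ((Equiv.Perm.sign pi : ℤ) : ℚ) * PrU (⋂ i : ZMod k, E i (pi i))

/-- The matrix of events `M_α`: `M_{α,i,j} = I^{f(i)}_{i,j}` for `i ∈ [k-1]`, and the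
row of `i = k` (i.e. `0`) is constant equal to `Ω`. -/
def Malpha (k r : ℕ) [NeZero k] (p : ZMod k → ℕ) (i j : ZMod k) : Set (OmS k r p) :=
  {om : OmS k r p | ∀ hi : i ≠ 0, cyc k i j ⊆ om.1.1 (om.1.2 ⟨i, hi⟩)}

/-- The matrix of events `M_β`: `M_{β,i,j} = J^{f(i)}_{i,j+1}` for `i ∈ [k-1]`, and the
row of `i = k` (i.e. `0`) is constant equal to `Ω`. -/
def Mbeta (k r : ℕ) [NeZero k] (p : ZMod k → ℕ) (i j : ZMod k) : Set (OmS k r p) :=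
  {om : OmS k r p | ∀ hi : i ≠ 0,
    if i = j + 1 then om.1.1 (om.1.2 ⟨i, hi⟩) = Finset.univ
    else cyc k i (j + 1) ⊆ om.1.1 (om.1.2 ⟨i, hi⟩)}

/-- Membership of `om` in the event `J^{f(i)}_{a,b}`. -/
def Jmem (k r : ℕ) [NeZero k] (p : ZMod k → ℕ) (om : OmS k r p)
    (i : {i : ZMod k // i ≠ 0}) (a b : ZMod k) : Prop :=
  if a = b then om.1.1 (om.1.2 i) = Finset.univ else cyc k a b ⊆ om.1.1 (om.1.2 i)


/-!
Fix `(S, f)`. Expanding `∏ᵢ ([J_{i,π(i)+1}] - [J_{i-1,π(i)+1}])` over the subsets `D` turns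
the inner sum into the permutation expansion of `det M`, where row `0` of `M` is all ones and
row `i ∈ [k-1]` is `m ↦ [J^{f(i)}_{i,m+1}] - [J^{f(i)}_{i-1,m+1}]`. A case analysis on `γ`
shows that, ordering `ZMod k` by representatives, this row is `m ↦ [i ≤ m] - [γ(i) ≤ m]` plus
a constant. Subtracting multiples of row `0` therefore turns `M` into `(1 - A) U`, with
`U = ([j ≤ m])` unitriangular and `A` the adjacency matrix of `G_γ` (no arc out of the root
`k`). Finally `det (1 - A)` is `1` if every vertex reaches the root (it is triangular for the
depth order) and `0` otherwise (a cycle of `G_γ` gives a left null vector), and averaging over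
`Ω` gives the theorem.
-/
namespace ZMod

variable {k : ℕ} [NeZero k]

theorem one_lt_of_ne_zero {x : ZMod k} (hx : x ≠ 0) : 1 < k := by
  obtain rfl | hk := (Nat.one_le_iff_ne_zero.2 (NeZero.ne k)).eq_or_lt
  · exact absurd (Subsingleton.elim x 0) hx
  · exact hk

theorem val_add_one_eq_ite (x : ZMod k) :
    (x + 1).val = if x.val + 1 = k then 0 else x.val + 1 := by
  have hx := x.val_lt
  rw [val_add, val_one_eq_one_mod]
  rcases (Nat.one_le_iff_ne_zero.2 (NeZero.ne k)).eq_or_lt with rfl | hk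
  · rw [if_pos (by omega)]
    exact Nat.mod_one _
  · rw [Nat.mod_eq_of_lt hk]
    split_ifs with h
    · rw [h, Nat.mod_self]
    · exact Nat.mod_eq_of_lt (by omega)

theorem val_sub_eq_ite (a b : ZMod k) :
    (a - b).val = if b.val ≤ a.val then a.val - b.val else k + a.val - b.val := by
  split_ifs with h
  · exact val_sub h
  · have hba : b - a ≠ 0 := fun h0 => h (by rw [sub_eq_zero.1 h0])
    rw [← neg_sub, neg_val, if_neg hba, val_sub (by omega)]
    have := b.val_lt
    omega

end ZMod

section Cyc

variable {k : ℕ} [NeZero k] {a b m x : ZMod k}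

theorem mem_cyc : x ∈ cyc k a b ↔ 1 ≤ (x - a).val ∧ (x - a).val ≤ (b - a).val := by
  simp [cyc]

theorem add_one_mem_cyc_iff : m + 1 ∈ cyc k a b ↔ (m - a).val < (b - a).val := by
  have h := ZMod.val_add_one_eq_ite (m - a)
  rw [show m - a + 1 = m + 1 - a by ring] at h
  rw [mem_cyc, h]
  have := (b - a).val_lt
  split_ifs <;> omega

theorem mem_cyc_iff_val_lt : x ∈ cyc k a b ↔ (x - 1 - a).val < (b - a).val := by
  rw [← add_one_mem_cyc_iff, sub_add_cancel]

theorem left_notMem_cyc : a ∉ cyc k a b := by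
  simp [mem_cyc]

theorem cyc_subset_cyc {c : ZMod k} (h : (b - a).val ≤ (c - a).val) : cyc k a b ⊆ cyc k a c :=
  fun _ hx => mem_cyc.2 ((mem_cyc.1 hx).imp_right (·.trans h))

theorem mem_cyc_sub_one (h : x ≠ a) : x ∈ cyc k a (a - 1) := by
  have hk : 1 < k := ZMod.one_lt_of_ne_zero (sub_ne_zero.2 h)
  have : Fact (1 < k) := ⟨hk⟩
  have h1 : (x - a).val ≠ 0 := by simpa [sub_eq_zero] using h
  have h2 : (a - 1 - a).val = k - 1 := by
    rw [show a - 1 - a = -1 by ring, ZMod.neg_val, if_neg one_ne_zero, ZMod.val_one]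
  rw [mem_cyc, h2]
  have := (x - a).val_lt
  omega

theorem cyc_sub_one_left (h : b ≠ a - 1) : cyc k (a - 1) b = insert a (cyc k a b) := by
  ext x
  have hb : (b - a).val + 1 ≠ k := by
    intro hb
    have := ZMod.val_add_one_eq_ite (b - a)
    rw [if_pos hb, ZMod.val_eq_zero, sub_add_eq_add_sub, sub_eq_zero] at this
    exact h (eq_sub_of_add_eq this)
  have hx := ZMod.val_add_one_eq_ite (x - a)
  have hb' := ZMod.val_add_one_eq_ite (b - a)
  rw [sub_add] at hx hb'
  rw [if_neg hb] at hb'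
  rw [Finset.mem_insert, mem_cyc, mem_cyc, hb', ← sub_eq_zero, ← ZMod.val_eq_zero]
  have := (b - a).val_lt
  split_ifs at hx <;> omega

theorem ite_val_sub_lt_val_sub (i j m : ZMod k) :
    (if (m - i).val < (j - i).val then 1 else 0 : ℚ) =
      (if i.val ≤ m.val then 1 else 0) - (if j.val ≤ m.val then 1 else 0) +
        if j.val < i.val then 1 else 0 := by
  rw [ZMod.val_sub_eq_ite, ZMod.val_sub_eq_ite]
  have := m.val_lt
  have := j.val_lt
  have := i.val_lt
  split_ifs <;> (try norm_num) <;> omega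

end Cyc

section Covers

variable {k : ℕ} [NeZero k] {S : Finset (ZMod k)} {a b i j : ZMod k}

/-- The event `J_{a,b}` for a single set `S`. -/
def Covers (S : Finset (ZMod k)) (a b : ZMod k) : Prop :=
  if a = b then S = Finset.univ else cyc k a b ⊆ S

instance : DecidableRel (Covers S) := fun a b => by unfold Covers; infer_instance

theorem cyc_self : cyc k a a = ∅ := by
  ext x
  simp only [mem_cyc, sub_self, ZMod.val_zero, Finset.notMem_empty, iff_false]
  omega

theorem covers_iff_mem_cyc {T : ZMod k} (hS : S ≠ Finset.univ) (hT : cyc k a T ⊆ S)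
    (hT1 : T + 1 ∉ S) : Covers S a b ↔ b ∈ cyc k a T := by
  unfold Covers
  split_ifs with hab
  · subst hab
    simp [hS, left_notMem_cyc]
  · refine ⟨fun h => ?_, fun hb => (cyc_subset_cyc (mem_cyc.1 hb).2).trans hT⟩
    by_contra hb
    have hba : (b - a).val ≠ 0 := by simpa [sub_eq_zero] using Ne.symm hab
    rw [mem_cyc, not_and, not_le] at hb
    exact hT1 (h (add_one_mem_cyc_iff.2 (hb (by omega))))

theorem not_covers_sub_one (hi : i ∉ S) : ¬Covers S (i - 1) b := by
  unfold Covers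
  split_ifs with h
  · rintro rfl
    exact hi (Finset.mem_univ i)
  · rw [cyc_sub_one_left (Ne.symm h), Finset.insert_subset_iff]
    exact fun hsub => hi hsub.1

theorem covers_sub_one_iff (hk : 1 < k) (hS : S ≠ Finset.univ) (hi : i ∈ S) :
    Covers S (i - 1) b ↔ b = i ∨ Covers S i b := by
  have : Fact (1 < k) := ⟨hk⟩
  by_cases hb : b = i - 1
  · subst hb
    have hcyc : ¬cyc k i (i - 1) ⊆ S := fun hsub => hS <| Finset.eq_univ_iff_forall.2 fun x =>
      if hx : x = i then hx ▸ hi else hsub (mem_cyc_sub_one hx)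
    simp [Covers, hS, hcyc]
  · rw [Covers, if_neg (Ne.symm hb), cyc_sub_one_left hb, Finset.insert_subset_iff]
    by_cases hib : b = i
    · subst hib
      simp [hi, cyc_self]
    · simp [Covers, hi, hib, Ne.symm hib]

theorem exists_gammaRel (S : Finset (ZMod k)) (i : ZMod k) : ∃ j, gammaRel k S i j := by
  unfold gammaRel
  split_ifs with hS
  · exact ⟨i, rfl⟩
  · exact ⟨i - 1, rfl⟩
  · -- `x = j + 1` is the first element after `i` that is missing from `S`
    have hne : (Finset.univ.filter (· ∉ S)).Nonempty := by
      simpa [Finset.filter_nonempty_iff, Finset.eq_univ_iff_forall] using hS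
    obtain ⟨x, hxS, hmin⟩ := Finset.exists_min_image _ (fun x => (x - (i + 1)).val) hne
    refine ⟨x - 1, by simpa using hxS, fun y hy => ?_⟩
    by_contra hyS
    have hxy := hmin y (by simpa using hyS)
    rw [mem_cyc_iff_val_lt, sub_sub, sub_sub, add_comm 1 i] at hy
    omega

theorem exists_ite_covers_sub_eq (hi : i ≠ 0) (hj : gammaRel k S i j) :
    ∃ c : ℚ, ∀ m : ZMod k,
      (if Covers S i (m + 1) then 1 else 0) - (if Covers S (i - 1) (m + 1) then 1 else 0) =
        (if i.val ≤ m.val then 1 else 0) - (if j.val ≤ m.val then 1 else 0) + c := by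
  have hk := ZMod.one_lt_of_ne_zero hi
  unfold gammaRel at hj
  split_ifs at hj with hS hiS
  · subst hj
    exact ⟨0, fun m => by simp [Covers, hS]⟩
  · subst hj
    refine ⟨0, fun m => ?_⟩
    have : Fact (1 < k) := ⟨hk⟩
    have hi0 : i.val ≠ 0 := by simpa using hi
    have hval : (i - 1).val = i.val - 1 := by
      rw [ZMod.val_sub (by rw [ZMod.val_one]; omega), ZMod.val_one]
    have hm : m + 1 = i ↔ m.val + 1 = i.val := by
      rw [← (ZMod.val_injective k).eq_iff, ZMod.val_add_one_eq_ite]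
      have := i.val_lt
      split_ifs <;> omega
    rw [hval, if_congr (covers_sub_one_iff hk hS hiS) rfl rfl]
    by_cases hmi : m + 1 = i
    · have := hm.1 hmi
      simp only [hmi, true_or, if_true, Covers, hS]
      split_ifs <;> (try norm_num) <;> omega
    · have := hm.not.1 hmi
      simp only [hmi, false_or, sub_self]
      split_ifs <;> (try norm_num) <;> omega
  · refine ⟨if j.val < i.val then 1 else 0, fun m => ?_⟩
    rw [if_neg (not_covers_sub_one hiS), sub_zero,
      if_congr ((covers_iff_mem_cyc hS hj.2 hj.1).trans add_one_mem_cyc_iff) rfl rfl]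
    exact ite_val_sub_lt_val_sub i j m

end Covers

section RootedFunctionalGraph

open Matrix

variable {α R : Type*} [Fintype α] [DecidableEq α] [CommRing R] {root : α} {g : α → α}

def rootedAdj (root : α) (g : α → α) : Matrix α α R :=
  Matrix.of fun i j => if i ≠ root ∧ j = g i then 1 else 0

theorem one_sub_rootedAdj_mul_root (M : Matrix α α R) :
    ((1 - rootedAdj root g : Matrix α α R) * M) root = M root := by
  rw [Matrix.sub_mul, Matrix.one_mul]
  ext m
  simp [rootedAdj, Matrix.mul_apply]

theorem one_sub_rootedAdj_mul_of_ne {i : α} (hi : i ≠ root) (M : Matrix α α R) :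
    ((1 - rootedAdj root g : Matrix α α R) * M) i = M i - M (g i) := by
  rw [Matrix.sub_mul, Matrix.one_mul]
  ext m
  simp [rootedAdj, Matrix.mul_apply, hi]

theorem det_one_sub_rootedAdj_of_reaches (h : ∀ x, ∃ n, g^[n] x = root) :
    (1 - rootedAdj root g : Matrix α α R).det = 1 := by
  let depth : α → ℕ := fun x => Nat.find (h x)
  have hdepth : ∀ i ≠ root, depth (g i) < depth i := by
    intro i hi
    have hpos : depth i ≠ 0 := fun h0 => hi (by simpa [depth, h0] using Nat.find_spec (h i))
    have hg : g^[depth i - 1] (g i) = root := by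
      rw [← Function.iterate_succ_apply, Nat.succ_eq_add_one, Nat.sub_add_cancel (by omega)]
      exact Nat.find_spec (h i)
    have : depth (g i) ≤ depth i - 1 := Nat.find_min' (h (g i)) hg
    omega
  have hadj : ∀ i j, depth i ≤ depth j → ¬(i ≠ root ∧ j = g i) := by
    rintro i j hij ⟨hi, rfl⟩
    exact (hdepth i hi).not_ge hij
  have htri :
      (1 - rootedAdj root g : Matrix α α R).BlockTriangular (OrderDual.toDual ∘ depth) := by
    intro i j hij
    have hne : i ≠ j := by
      rintro rfl
      exact lt_irrefl _ hij
    simp [rootedAdj, hne, hadj i j (le_of_lt hij)]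
  rw [htri.det]
  refine Finset.prod_eq_one fun d _ => ?_
  have hblock :
      (1 - rootedAdj root g : Matrix α α R).toSquareBlock (OrderDual.toDual ∘ depth) d = 1 := by
    ext ⟨i, hi⟩ ⟨j, hj⟩
    have := hadj i j (OrderDual.toDual.injective (hi.trans hj.symm)).le
    by_cases hij : i = j
    · subst hij
      simp [Matrix.toSquareBlock_def, rootedAdj, this]
    · simp [Matrix.toSquareBlock_def, rootedAdj, hij, this]
  rw [hblock, Matrix.det_one]

theorem det_one_sub_rootedAdj_of_not_reaches [IsDomain R] [CharZero R]
    (h : ¬∀ x, ∃ n, g^[n] x = root) : (1 - rootedAdj root g : Matrix α α R).det = 0 := by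
  push Not at h
  obtain ⟨x, hx⟩ := h
  obtain ⟨s, t, hst, hrep⟩ : ∃ s t, s < t ∧ g^[s] x = g^[t] x := by
    obtain ⟨a, b, hab, heq⟩ := Finite.exists_ne_map_eq_of_infinite fun n => g^[n] x
    rcases hab.lt_or_gt with h | h
    exacts [⟨a, b, h, heq⟩, ⟨b, a, h, heq.symm⟩]
  -- the orbit segment from `g^[s] x` to `g^[t] x`, counted with multiplicity, is a left null vector
  let orbit : ℕ → α → R := fun n => Pi.single (g^[n] x) 1
  have hrow : ∀ n, orbit n ᵥ* (1 - rootedAdj root g) = orbit n - orbit (n + 1) := by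
    intro n
    ext j
    simp [orbit, rootedAdj, Matrix.one_apply, (hx n).symm, Pi.single_apply,
      Function.iterate_succ_apply', eq_comm]
  rw [← Matrix.exists_vecMul_eq_zero_iff]
  refine ⟨∑ n ∈ Finset.Ico s t, orbit n, fun hv => ?_, ?_⟩
  · have := congrFun hv (g^[s] x)
    simp only [Finset.sum_apply, orbit, Pi.single_apply, Pi.zero_apply, Finset.sum_boole] at this
    rw [Nat.cast_eq_zero, Finset.card_eq_zero, Finset.filter_eq_empty_iff] at this
    exact this (Finset.mem_Ico.2 ⟨le_rfl, hst⟩) rfl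
  · rw [Matrix.sum_vecMul, Finset.sum_congr rfl fun n _ => hrow n, Finset.sum_Ico_eq_sum_range]
    refine (Finset.sum_range_sub' (fun n => orbit (s + n)) (t - s)).trans ?_
    simp [orbit, Nat.add_sub_cancel' hst.le, hrep]

end RootedFunctionalGraph

theorem Matrix.det_eq_of_forall_row_eq_add_smul {n R : Type*} [Fintype n] [DecidableEq n]
    [CommRing R] {A B : Matrix n n R} (i₀ : n) (h₀ : A i₀ = B i₀)
    (h : ∀ i ≠ i₀, ∃ c : R, A i = B i + c • B i₀) : A.det = B.det := by
  choose! c hc using h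
  let c' : n → R := Function.update c i₀ 0
  have hA : A = (1 + replicateCol Unit c' * replicateRow Unit (Pi.single i₀ (1 : R))) * B := by
    ext i m
    by_cases hi : i = i₀
    · subst hi
      simp [Matrix.mul_apply, Matrix.one_apply, replicateCol_apply, replicateRow_apply, c', h₀]
    · simp [Matrix.mul_apply, Matrix.one_apply, replicateCol_apply, replicateRow_apply, c', hi,
        hc i hi, Pi.single_apply, add_mul, Finset.sum_add_distrib]
  rw [hA, det_mul, det_one_add_replicateCol_mul_replicateRow]
  simp [c']

section ValLe

variable (k : ℕ) [NeZero k] (R : Type*) [CommRing R]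

def valLeMatrix : Matrix (ZMod k) (ZMod k) R :=
  Matrix.of fun j m => if j.val ≤ m.val then 1 else 0

theorem det_valLeMatrix : (valLeMatrix k R).det = 1 := by
  let _ : LinearOrder (ZMod k) := LinearOrder.lift' ZMod.val (ZMod.val_injective k)
  rw [Matrix.det_of_isUpperTriangular]
  · simp [valLeMatrix]
  · intro i j hij
    have : j.val < i.val := hij
    simp [valLeMatrix, this.not_ge]

end ValLe

theorem sum_powerset_neg_one_pow_mul_ite_forall {ι α R : Type*} [Fintype ι] [DecidableEq ι]
    [CommRing R] (P : ι → α → Prop) [∀ i, DecidablePred (P i)] (a b : ι → α) :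
    ∑ D ∈ (Finset.univ : Finset ι).powerset,
        (-1 : R) ^ D.card * (if ∀ i, P i (if i ∈ D then a i else b i) then 1 else 0) =
      ∏ i, ((if P i (b i) then 1 else 0) - if P i (a i) then 1 else 0) := by
  rw [Finset.prod_sub]
  refine Finset.sum_congr rfl fun D _ => ?_
  have hprod : (if ∀ i, P i (if i ∈ D then a i else b i) then (1 : R) else 0) =
      ∏ i, if P i (if i ∈ D then a i else b i) then 1 else 0 := by
    simp [Finset.prod_boole]
  rw [mul_assoc, hprod, ← Finset.prod_sdiff (Finset.subset_univ D)]
  congr 2 <;> refine Finset.prod_congr rfl fun i hi => ?_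
  · rw [if_neg (Finset.mem_sdiff.1 hi).2]
  · rw [if_pos hi]

theorem Matrix.det_eq_sum_sign_mul_prod_ne_of_row_eq_one {n R : Type*} [Fintype n]
    [DecidableEq n] [CommRing R] {M : Matrix n n R} {i₀ : n} (h : ∀ m, M i₀ m = 1) :
    M.det = ∑ σ : Equiv.Perm n,
      ((Equiv.Perm.sign σ : ℤ) : R) * ∏ i : {i // i ≠ i₀}, M i (σ i) := by
  rw [← det_transpose, det_apply']
  refine Finset.sum_congr rfl fun σ _ => ?_
  rw [Fintype.prod_eq_mul_prod_subtype_ne _ i₀]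
  simp [h]

section JMatrix

variable {k : ℕ} [NeZero k]

/-- The matrix `M` of the proof sketch, for the family `i ↦ S_{f(i)}`. -/
def jMatrix (S : {i : ZMod k // i ≠ 0} → Finset (ZMod k)) : Matrix (ZMod k) (ZMod k) ℚ :=
  Matrix.of fun i m => if hi : i = 0 then 1 else
    (if Covers (S ⟨i, hi⟩) i (m + 1) then 1 else 0) -
      if Covers (S ⟨i, hi⟩) (i - 1) (m + 1) then 1 else 0

theorem det_jMatrix_eq {S : {i : ZMod k // i ≠ 0} → Finset (ZMod k)} {g : ZMod k → ZMod k}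
    (hg : ∀ i : {i : ZMod k // i ≠ 0}, gammaRel k (S i) i (g i)) :
    (jMatrix S).det = (1 - rootedAdj 0 g : Matrix (ZMod k) (ZMod k) ℚ).det := by
  rw [Matrix.det_eq_of_forall_row_eq_add_smul 0 (B := (1 - rootedAdj 0 g) * valLeMatrix k ℚ),
    Matrix.det_mul, det_valLeMatrix, mul_one]
  · funext m
    simp [jMatrix, one_sub_rootedAdj_mul_root, valLeMatrix]
  · intro i hi
    obtain ⟨c, hc⟩ := exists_ite_covers_sub_eq hi (hg ⟨i, hi⟩)
    refine ⟨c, funext fun m => ?_⟩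
    simp [jMatrix, hi, hc, one_sub_rootedAdj_mul_root, one_sub_rootedAdj_mul_of_ne hi, valLeMatrix]

open Classical in
theorem det_jMatrix_eq_ite {r : ℕ} (S : Fin r → Finset (ZMod k))
    (f : {i : ZMod k // i ≠ 0} → Fin r) :
    (jMatrix fun i => S (f i)).det = if GIsTree k r (gammaRel k) S f then 1 else 0 := by
  split_ifs with htree
  · obtain ⟨g, -, hg, hreach⟩ := htree
    rw [det_jMatrix_eq hg, det_one_sub_rootedAdj_of_reaches hreach]
  · choose g hg using fun i : {i : ZMod k // i ≠ 0} => exists_gammaRel (S (f i)) i.1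
    let g' : ZMod k → ZMod k := fun x => if hx : x = 0 then 0 else g ⟨x, hx⟩
    have hg' : ∀ i : {i : ZMod k // i ≠ 0}, gammaRel k (S (f i)) i (g' i) := fun i => by
      simpa [g', i.2] using hg i
    have hreach : ¬∀ x, ∃ n, g'^[n] x = 0 := fun h => htree ⟨g', dif_pos rfl, hg', h⟩
    rw [det_jMatrix_eq hg', det_one_sub_rootedAdj_of_not_reaches hreach]

open Classical in
theorem sum_sign_mul_sum_powerset_eq_ite {r : ℕ} {p : ZMod k → ℕ} (om : OmS k r p) :
    ∑ pi : Equiv.Perm (ZMod k), ((Equiv.Perm.sign pi : ℤ) : ℚ) *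
      ∑ D ∈ (Finset.univ : Finset {i : ZMod k // i ≠ 0}).powerset, (-1 : ℚ) ^ D.card *
        (if ∀ i, Jmem k r p om i (if i ∈ D then i.1 - 1 else i.1) (pi i.1 + 1) then 1 else 0) =
      if GIsTree k r (gammaRel k) om.1.1 om.1.2 then 1 else 0 := by
  rw [← det_jMatrix_eq_ite,
    Matrix.det_eq_sum_sign_mul_prod_ne_of_row_eq_one (i₀ := 0) (by simp [jMatrix])]
  refine Finset.sum_congr rfl fun pi _ => ?_
  rw [sum_powerset_neg_one_pow_mul_ite_forall (fun i x => Jmem k r p om i x (pi i.1 + 1))]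
  refine congrArg _ (Finset.prod_congr rfl fun i _ => ?_)
  simp [jMatrix, i.2, Jmem, Covers]

end JMatrix

theorem PrU_eq_sum_div {Om : Type} [Fintype Om] (A : Set Om) [DecidablePred (· ∈ A)] :
    PrU A = (∑ ω, if ω ∈ A then 1 else 0) / Fintype.card Om := by
  rw [PrU, Nat.card_eq_fintype_card, Nat.card_eq_fintype_card, Fintype.card_subtype,
    Finset.sum_boole]

theorem prob_tree_gamma_eq_sum_general (k r : ℕ) [NeZero k]
    (p : ZMod k → ℕ) :
    (Nat.card {om : OmS k r p // GIsTree k r (gammaRel k) om.1.1 om.1.2} : ℚ) /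
      (Nat.card (OmS k r p) : ℚ) =
    ∑ pi : Equiv.Perm (ZMod k), ((Equiv.Perm.sign pi : ℤ) : ℚ) *
      ∑ D ∈ (Finset.univ : Finset {i : ZMod k // i ≠ 0}).powerset,
        (-1 : ℚ) ^ D.card *
          PrU (⋂ i : {i : ZMod k // i ≠ 0},
            {om : OmS k r p |
              Jmem k r p om i (if i ∈ D then i.1 - 1 else i.1) (pi i.1 + 1)}) := by
  classical
  change PrU {om : OmS k r p | GIsTree k r (gammaRel k) om.1.1 om.1.2} = _
  simp only [PrU_eq_sum_div, Set.mem_iInter, Set.mem_ofPred_eq, ← Finset.sum_div,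
    ← mul_div_assoc, Finset.mul_sum]
  congr 1
  rw [Finset.sum_congr rfl fun om _ => (sum_sign_mul_sum_powerset_eq_ite om).symm]
  simp only [Finset.mul_sum]
  exact Finset.sum_comm.trans (Finset.sum_congr rfl fun _ _ => Finset.sum_comm)

/-- For `(S,f)` uniform on `Ω`, the probability that `G_γ(S,f)` is a tree equals
`Σ_{π ∈ 𝔖_k} sgn(π) Σ_{D ⊆ [k-1]} (-1)^{|D|} Pr(∩_{i ∈ [k-1]} J^{f(i)}_{c_i(D), π(i)+1})`,
where `c_i(D) = i - 1` if `i ∈ D` and `c_i(D) = i` otherwise (cyclically modulo `k`). -/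
theorem prob_tree_gamma_eq_sum (k r : ℕ) [NeZero k] (hr : 0 < r) (hrk : r < k)
    (p : ZMod k → ℕ)
    (hS : Nonempty {S : Fin r → Finset (ZMod k) // SprMem k r p S}) :
    (Nat.card {om : OmS k r p // GIsTree k r (gammaRel k) om.1.1 om.1.2} : ℚ) /
      (Nat.card (OmS k r p) : ℚ) =
    ∑ pi : Equiv.Perm (ZMod k), ((Equiv.Perm.sign pi : ℤ) : ℚ) *
      ∑ D ∈ (Finset.univ : Finset {i : ZMod k // i ≠ 0}).powerset,
        (-1 : ℚ) ^ D.card *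
          PrU (⋂ i : {i : ZMod k // i ≠ 0},
            {om : OmS k r p |
              Jmem k r p om i (if i ∈ D then i.1 - 1 else i.1) (pi i.1 + 1)}) :=
  prob_tree_gamma_eq_sum_general k r p
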